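/- Let N be an even positive integer and consider the Hilbert space (ℂ²)^⊗N of N qubits. Define V = Σ_{k=1}^{N/2} (σ^x_{2k-1} σ^y_{2k} − σ^y_{2k} σ^x_{2k+1}) with periodic identification σ_{N+1} = σ_1. Then any product state Ψ = φ_1 ⊗ ζ_1 ⊗ φ_2 ⊗ ζ_2 ⊗ … ⊗ φ_{N/2} ⊗ ζ_{N/2}, where each φ_j ∈ {(1,1)ᵀ, (1,−1)ᵀ} and each ζ_j ∈ {(1,i)ᵀ, (1,−i)ᵀ}, is an eigenvector of V with eigenvalue N − 2M, where M is the number of links n (1 ≤ n ≤ N, cyclically) at which the in-plane polarization angle decreases by π/2 (an 'anticlockwise' link, i.e., a kink). -/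

import Mathlib

noncomputable section
open Matrix Complex BigOperators Finset

/-- Pauli x matrix. -/
def pX : Matrix (Fin 2) (Fin 2) ℂ := !![0, 1; 1, 0]
/-- Pauli y matrix. -/
def pY : Matrix (Fin 2) (Fin 2) ℂ := !![0, -Complex.I; Complex.I, 0]
/-- Pauli z matrix. -/
def pZ : Matrix (Fin 2) (Fin 2) ℂ := !![1, 0; 0, -1]

/-- The operator acting as `A` on the `n`-th qubit (0-based) and as identity elsewhere,
on the `N`-qubit space `(ℂ²)^⊗N`, realized as matrices indexed by `Fin N → Fin 2`. -/
def site (N : ℕ) (A : Matrix (Fin 2) (Fin 2) ℂ) (n : Fin N) :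
    Matrix (Fin N → Fin 2) (Fin N → Fin 2) ℂ :=
  Matrix.of fun s t => ∏ j : Fin N, if j = n then A (s j) (t j) else if s j = t j then 1 else 0

/-- The chiral operator `V = Σ_{k=1}^{N/2} (σ^x_{2k-1} σ^y_{2k} − σ^y_{2k} σ^x_{2k+1})`
(1-based paper indices; here sites are 0-based, and indices are taken mod N via `Nat.cast`). -/
def Vop (N : ℕ) [NeZero N] : Matrix (Fin N → Fin 2) (Fin N → Fin 2) ℂ :=
  ∑ k ∈ Finset.range (N / 2),
    (site N pX (Fin.ofNat N (2 * k)) * site N pY (Fin.ofNat N (2 * k + 1))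
      - site N pY (Fin.ofNat N (2 * k + 1)) * site N pX (Fin.ofNat N (2 * k + 2)))

/-!
The site vector `(1, e)` is an eigenvector of `σˣ` with eigenvalue `e` when `e = ±1` and of `σʸ`
with eigenvalue `-i e` when `e = ±i`, and a single-site operator acts on a product state through
its own factor only; hence every summand of `V` is diagonal on `Ψ`. Since `e⁻¹ = e` for `e = ±1`
and `e⁻¹ = -e` for `e = ±i`, the eigenvalue of the summand on sites `2k, 2k+1, 2k+2` is the sum of
the link phases `-i ε(n+1) / ε(n)` of its two links. Consecutive values of `ε` differ by a quarter
turn, so a link phase is `-1` on a kink and `1` otherwise; summing over the `N` links gives `N - 2M`.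
-/

open Fin.NatCast

def planeState (e : ℂ) : Fin 2 → ℂ := fun i => if i = 0 then 1 else e

lemma pX_mulVec_planeState {e : ℂ} (h : e ^ 2 = 1) : pX *ᵥ planeState e = e • planeState e := by
  ext i
  fin_cases i <;> simp [pX, planeState, mulVec, dotProduct, Fin.sum_univ_two]
  all_goals linear_combination -h

lemma pY_mulVec_planeState {e : ℂ} (h : e ^ 2 = -1) :
    pY *ᵥ planeState e = (-I * e) • planeState e := by
  ext i
  fin_cases i <;> simp [pY, planeState, mulVec, dotProduct, Fin.sum_univ_two]
  all_goals linear_combination I * h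

lemma site_mulVec_prod {N : ℕ} (A : Matrix (Fin 2) (Fin 2) ℂ) (n : Fin N) (f : Fin N → Fin 2 → ℂ) :
    site N A n *ᵥ (fun s => ∏ j, f j (s j))
      = fun s => ∏ j, Function.update f n (A *ᵥ f n) j (s j) := by
  ext s
  simp only [mulVec, dotProduct, site, of_apply, ← Finset.prod_mul_distrib]
  rw [← Fintype.prod_sum fun j (i : Fin 2) =>
    (if j = n then A (s j) i else if s j = i then 1 else 0) * f j i]
  refine Finset.prod_congr rfl fun j _ => ?_
  by_cases hj : j = n
  · subst hj
    simp only [↓reduceIte, Function.update_self]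
    rfl
  · simp [hj, ite_mul]

lemma site_mulVec_prod_of_mulVec_eq_smul {N : ℕ} {A : Matrix (Fin 2) (Fin 2) ℂ} {n : Fin N}
    {f : Fin N → Fin 2 → ℂ} {c : ℂ} (h : A *ᵥ f n = c • f n) :
    site N A n *ᵥ (fun s => ∏ j, f j (s j)) = c • fun s => ∏ j, f j (s j) := by
  rw [site_mulVec_prod, h]
  ext s
  have hfactor : ∀ j, Function.update f n (c • f n) j (s j)
      = (if j = n then c else 1) * f j (s j) := by
    intro j
    by_cases hj : j = n
    · subst hj; simp
    · simp [hj]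
  simp only [hfactor, Finset.prod_mul_distrib, Fintype.prod_ite_eq', Pi.smul_apply, smul_eq_mul]

lemma sum_range_two_mul_eq_sum_pairs {M : Type*} [AddCommMonoid M] (g : ℕ → M) (m : ℕ) :
    ∑ n ∈ range (2 * m), g n = ∑ k ∈ range m, (g (2 * k) + g (2 * k + 1)) := by
  induction m with
  | zero => simp
  | succ m ih => rw [Nat.mul_succ, sum_range_succ, sum_range_succ, sum_range_succ, ih, add_assoc]

def productState {N : ℕ} (ε : Fin N → ℂ) : (Fin N → Fin 2) → ℂ :=
  fun s => ∏ j, planeState (ε j) (s j)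

section
variable {N : ℕ} [NeZero N] {ε : Fin N → ℂ}

lemma XY_sub_YX_mulVec_productState {m : Fin N} (h₀ : ε m ^ 2 = 1) (h₁ : ε (m + 1) ^ 2 = -1)
    (h₂ : ε (m + 1 + 1) ^ 2 = 1) :
    (site N pX m * site N pY (m + 1) - site N pY (m + 1) * site N pX (m + 1 + 1)) *ᵥ
        productState ε
      = (-I * ε (m + 1) / ε m + -I * ε (m + 1 + 1) / ε (m + 1)) • productState ε := by
  have hX₀ := site_mulVec_prod_of_mulVec_eq_smul (N := N) (n := m)
    (f := fun j => planeState (ε j)) (pX_mulVec_planeState h₀)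
  have hY := site_mulVec_prod_of_mulVec_eq_smul (N := N) (n := m + 1)
    (f := fun j => planeState (ε j)) (pY_mulVec_planeState h₁)
  have hX₂ := site_mulVec_prod_of_mulVec_eq_smul (N := N) (n := m + 1 + 1)
    (f := fun j => planeState (ε j)) (pX_mulVec_planeState h₂)
  unfold productState
  rw [sub_mulVec, ← mulVec_mulVec, ← mulVec_mulVec, hY, hX₂, mulVec_smul,
    mulVec_smul, hX₀, hY, smul_smul, smul_smul, ← sub_smul]
  have h₀' : ε m ≠ 0 := by rintro h; simp [h] at h₀
  have h₁' : ε (m + 1) ≠ 0 := by rintro h; simp [h] at h₁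
  congr 1
  field_simp
  linear_combination -ε (m + 1) ^ 2 * h₀ + ε m * ε (m + 1 + 1) * h₁

lemma Vop_mulVec_productState (hEven : Even N) (h₀ : ∀ n : Fin N, (n : ℕ) % 2 = 0 → ε n ^ 2 = 1)
    (h₁ : ∀ n : Fin N, (n : ℕ) % 2 = 1 → ε n ^ 2 = -1) :
    Vop N *ᵥ productState ε = (∑ n : Fin N, -I * ε (n + 1) / ε n) • productState ε := by
  have hmod (a : ℕ) : ((a : Fin N) : ℕ) % 2 = a % 2 := by
    rw [Fin.val_natCast, Nat.mod_mod_of_dvd _ hEven.two_dvd]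
  have hterm (k : ℕ) :
      (site N pX (2 * k : ℕ) * site N pY (2 * k + 1 : ℕ)
          - site N pY (2 * k + 1 : ℕ) * site N pX (2 * k + 2 : ℕ)) *ᵥ productState ε
        = (-I * ε ((2 * k : ℕ) + 1) / ε (2 * k : ℕ)
            + -I * ε ((2 * k + 1 : ℕ) + 1) / ε (2 * k + 1 : ℕ)) • productState ε := by
    have hsucc : ((2 * k + 1 : ℕ) : Fin N) = (2 * k : ℕ) + 1 := Nat.cast_succ _
    have hsucc' : ((2 * k + 2 : ℕ) : Fin N) = (2 * k + 1 : ℕ) + 1 := Nat.cast_succ _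
    rw [hsucc', hsucc]
    exact XY_sub_YX_mulVec_productState (h₀ _ (by rw [hmod]; omega))
      (hsucc ▸ h₁ _ (by rw [hmod]; omega)) (hsucc ▸ hsucc' ▸ h₀ _ (by rw [hmod]; omega))
  have hpairs : ∑ k ∈ range (N / 2), (-I * ε ((2 * k : ℕ) + 1) / ε (2 * k : ℕ)
        + -I * ε ((2 * k + 1 : ℕ) + 1) / ε (2 * k + 1 : ℕ))
      = ∑ n : Fin N, -I * ε (n + 1) / ε n := by
    rw [← sum_range_two_mul_eq_sum_pairs (fun n => -I * ε ((n : ℕ) + 1) / ε n),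
      Nat.mul_div_cancel' hEven.two_dvd, ← Fin.sum_univ_eq_sum_range]
    simp only [Fin.cast_val_eq_self]
  simp only [Vop, Fin.ofNat_eq_cast, sum_mulVec, hterm, ← Finset.sum_smul, hpairs]

lemma succ_eq_I_mul_or_eq_neg_I_mul (hEven : Even N)
    (hx : ∀ n : Fin N, (n : ℕ) % 2 = 0 → ε n = 1 ∨ ε n = -1)
    (hy : ∀ n : Fin N, (n : ℕ) % 2 = 1 → ε n = I ∨ ε n = -I) (n : Fin N) :
    ε (n + 1) = I * ε n ∨ ε (n + 1) = -I * ε n := by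
  have hsucc : ((n + 1 : Fin N) : ℕ) % 2 = ((n : ℕ) + 1) % 2 := by
    have : n + 1 = ((n + 1 : ℕ) : Fin N) := by simp
    rw [this, Fin.val_natCast, Nat.mod_mod_of_dvd _ hEven.two_dvd]
  rcases Nat.mod_two_eq_zero_or_one n with h | h
  · rcases hx n h with ha | ha <;> rcases hy (n + 1) (by omega) with hb | hb <;>
      simp [ha, hb]
  · rcases hy n h with ha | ha <;> rcases hx (n + 1) (by omega) with hb | hb <;>
      simp [ha, hb]

lemma neg_I_mul_div_eq_ite {a b : ℂ} (ha : a ≠ 0) (hb : b = I * a ∨ b = -I * a) :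
    -I * b / a = if b = -I * a then -1 else 1 := by
  rcases hb with rfl | rfl
  · have hne : I * a ≠ -I * a := by
      intro h
      have h2 : (2 * I) * a = 0 := by linear_combination h
      simp [ha] at h2
    rw [if_neg hne]
    field_simp
    simp
  · rw [if_pos rfl]
    field_simp
    simp

lemma sum_neg_I_mul_div_eq (hEven : Even N)
    (hx : ∀ n : Fin N, (n : ℕ) % 2 = 0 → ε n = 1 ∨ ε n = -1)
    (hy : ∀ n : Fin N, (n : ℕ) % 2 = 1 → ε n = I ∨ ε n = -I) :
    ∑ n : Fin N, -I * ε (n + 1) / ε n = N - 2 * #{n | ε (n + 1) = -I * ε n} := by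
  have hne (n : Fin N) : ε n ≠ 0 := by
    rcases Nat.mod_two_eq_zero_or_one n with h | h
    · rcases hx n h with h | h <;> simp [h]
    · rcases hy n h with h | h <;> simp [h]
  have hlink (n : Fin N) :
      -I * ε (n + 1) / ε n = 1 - 2 * if ε (n + 1) = -I * ε n then 1 else 0 := by
    rw [neg_I_mul_div_eq_ite (hne n) (succ_eq_I_mul_or_eq_neg_I_mul hEven hx hy n)]
    split_ifs <;> norm_num
  simp only [hlink, sum_sub_distrib, ← mul_sum, sum_boole, sum_const, card_univ, Fintype.card_fin,
    nsmul_eq_mul, mul_one]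

end

theorem stmt0_general (N : ℕ) [NeZero N] (hEven : Even N)
    (ε : Fin N → ℂ)
    (hx : ∀ n : Fin N, (n : ℕ) % 2 = 0 → ε n = 1 ∨ ε n = -1)
    (hy : ∀ n : Fin N, (n : ℕ) % 2 = 1 → ε n = Complex.I ∨ ε n = -Complex.I)
    (M : ℕ)
    (hM : M = (Finset.univ.filter fun n : Fin N => ε (n + 1) = -Complex.I * ε n).card)
    (Ψ : (Fin N → Fin 2) → ℂ)
    (hΨ : Ψ = fun s => ((Real.sqrt 2 : ℂ))⁻¹ ^ N * ∏ j : Fin N, (if s j = 0 then 1 else ε j)) :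
    (Vop N).mulVec Ψ = ((N : ℂ) - 2 * M) • Ψ := by
  have h₀ (n : Fin N) (hn : (n : ℕ) % 2 = 0) : ε n ^ 2 = 1 := by
    rcases hx n hn with h | h <;> simp [h]
  have h₁ (n : Fin N) (hn : (n : ℕ) % 2 = 1) : ε n ^ 2 = -1 := by
    rcases hy n hn with h | h <;> simp [h]
  have hΨ' : Ψ = ((Real.sqrt 2 : ℂ))⁻¹ ^ N • productState ε := hΨ
  rw [hΨ', mulVec_smul, Vop_mulVec_productState hEven h₀ h₁, sum_neg_I_mul_div_eq hEven hx hy, hM,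
    smul_comm]

/-- any product state with odd (paper-1-based) qubits polarized in `±x`
and even qubits polarized in `±y` directions is an eigenvector of `V` with eigenvalue
`N − 2M`, where `M` is the number of "anticlockwise" links (kinks), i.e. cyclic links
`(n, n+1)` where the in-plane polarization phase `ε` is multiplied by `−i`.
Site `j` (0-based) carries single-qubit state `(1, ε j)ᵀ` (overall normalization omitted,
being irrelevant for the eigenvalue equation). -/
theorem stmt0 (N : ℕ) [NeZero N] (hN : 0 < N) (hEven : Even N)
    (ε : Fin N → ℂ)
    (hx : ∀ n : Fin N, (n : ℕ) % 2 = 0 → ε n = 1 ∨ ε n = -1)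
    (hy : ∀ n : Fin N, (n : ℕ) % 2 = 1 → ε n = Complex.I ∨ ε n = -Complex.I)
    (M : ℕ)
    (hM : M = (Finset.univ.filter fun n : Fin N => ε (n + 1) = -Complex.I * ε n).card)
    (Ψ : (Fin N → Fin 2) → ℂ)
    (hΨ : Ψ = fun s => ((Real.sqrt 2 : ℂ))⁻¹ ^ N * ∏ j : Fin N, (if s j = 0 then 1 else ε j)) :
    (Vop N).mulVec Ψ = ((N : ℂ) - 2 * M) • Ψ :=
  stmt0_general N hEven ε hx hy M hM Ψ hΨ
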